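/- arXiv:2601.19828 — 3 statements merged into one kernel-verified Lean document; each statement's English description precedes it below -/
import Mathlib

section
/- Let H be a real Hilbert space with inner product ⟨·,·⟩ and norm ‖·‖, let q ∈ ℕ, and let a < b with τ = b − a, λ = 1/(2τ), and φ(t) = 1 − λ(t − a). Then for every H-valued polynomial v of degree at most q and every v⁻ ∈ H, ∫_a^b ⟨v'(t), φ(t) v(t)⟩ dt + ⟨v(a) − v⁻, v(a)⟩ = (1/4)‖v(b)‖² + (1/2)‖v(a) − v⁻‖² − (1/2)‖v⁻‖² + (λ/2) ∫_a^b ‖v(t)‖² dt. -/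
open MeasureTheory Set RealInnerProductSpace

/-- An `H`-valued polynomial of degree at most `q`:
`t ↦ ∑_{i=0}^{q} t^i • c i` with coefficients `c i ∈ H`. -/
def IsPolyDegLE (H : Type*) [AddCommGroup H] [Module ℝ H] (q : ℕ) (f : ℝ → H) : Prop :=
  ∃ c : Fin (q + 1) → H, ∀ t : ℝ, f t = ∑ i : Fin (q + 1), t ^ (i : ℕ) • c i

/- Integrating the derivative of `φ ‖v‖²` gives
`2 ∫_a^b ⟨v', φ v⟩ = φ(b)‖v(b)‖² - φ(a)‖v(a)‖² - ∫_a^b φ' ‖v‖²` for any `C¹` curve `v`; here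
`φ(a) = 1`, `φ(b) = 1/2`, `φ' = -λ`, and the jump term is rewritten by polarization. -/

theorem IsPolyDegLE.contDiff {H : Type*} [NormedAddCommGroup H] [NormedSpace ℝ H] {q : ℕ}
    {v : ℝ → H} (hv : IsPolyDegLE H q v) {n : WithTop ℕ∞} : ContDiff ℝ n v := by
  obtain ⟨c, hc⟩ := hv
  rw [funext hc]
  fun_prop

theorem integral_inner_deriv_smul_self {H : Type*} [NormedAddCommGroup H]
    [InnerProductSpace ℝ H] {v : ℝ → H} {φ : ℝ → ℝ} (hv : ContDiff ℝ 1 v) (hφ : ContDiff ℝ 1 φ)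
    (a b : ℝ) :
    2 * ∫ t in a..b, ⟪deriv v t, φ t • v t⟫ =
      φ b * ‖v b‖ ^ 2 - φ a * ‖v a‖ ^ 2 - ∫ t in a..b, deriv φ t * ‖v t‖ ^ 2 := by
  have hderiv : ∀ t, HasDerivAt (fun s => φ s * ‖v s‖ ^ 2)
      (deriv φ t * ‖v t‖ ^ 2 + φ t * (2 * ⟪v t, deriv v t⟫)) t := fun t =>
    (hφ.differentiable one_ne_zero t).hasDerivAt.mul
      (hv.differentiable one_ne_zero t).hasDerivAt.norm_sq
  have hftc := intervalIntegral.integral_eq_sub_of_hasDerivAt (a := a) (b := b)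
    (fun t _ => hderiv t)
    (by apply Continuous.intervalIntegrable; fun_prop)
  rw [intervalIntegral.integral_add (by apply Continuous.intervalIntegrable; fun_prop)
    (by apply Continuous.intervalIntegrable; fun_prop)] at hftc
  have hinner : (∫ t in a..b, φ t * (2 * ⟪v t, deriv v t⟫)) =
      2 * ∫ t in a..b, ⟪deriv v t, φ t • v t⟫ := by
    rw [← intervalIntegral.integral_const_mul]
    congr 1 with t
    rw [real_inner_smul_right, real_inner_comm]
    ring
  linarith

theorem real_inner_sub_self_left_eq {H : Type*} [NormedAddCommGroup H] [InnerProductSpace ℝ H]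
    (x y : H) : ⟪x - y, x⟫ = (1 / 2) * ‖x‖ ^ 2 + (1 / 2) * ‖x - y‖ ^ 2 - (1 / 2) * ‖y‖ ^ 2 := by
  rw [norm_sub_sq_real, inner_sub_left, real_inner_self_eq_norm_sq, real_inner_comm]
  ring

theorem identity_varphi_jump_general (H : Type*) [NormedAddCommGroup H] [InnerProductSpace ℝ H]
    (q : ℕ) (a b τ lam : ℝ) (hab : a < b) (hτ : τ = b - a)
    (hlam : lam = 1 / (2 * τ)) (φ : ℝ → ℝ) (hφ : ∀ t, φ t = 1 - lam * (t - a))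
    (v : ℝ → H) (hv : IsPolyDegLE H q v) (vminus : H) :
    (∫ t in a..b, ⟪deriv v t, φ t • v t⟫) + ⟪v a - vminus, v a⟫ =
      (1 / 4) * ‖v b‖ ^ 2 + (1 / 2) * ‖v a - vminus‖ ^ 2 - (1 / 2) * ‖vminus‖ ^ 2
        + (lam / 2) * ∫ t in a..b, ‖v t‖ ^ 2 := by
  have hφ_eq : φ = fun t => 1 - lam * (t - a) := funext hφ
  have hφ_smooth : ContDiff ℝ 1 φ := by rw [hφ_eq]; fun_prop
  have hφ' : deriv φ = fun _ => -lam := by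
    rw [hφ_eq]
    ext t
    simp
  have hφa : φ a = 1 := by simp [hφ]
  have hφb : φ b = 1 / 2 := by
    rw [hφ, hlam, hτ]
    field_simp [(sub_pos.mpr hab).ne']
    ring
  have henergy := integral_inner_deriv_smul_self hv.contDiff hφ_smooth a b
  rw [hφ', hφa, hφb, intervalIntegral.integral_const_mul] at henergy
  rw [real_inner_sub_self_left_eq]
  linarith

/-- Identity involving the auxiliary weight function `φ(t) = 1 - λ (t - a)` with `λ = 1/(2τ)`,
including the jump term at `a`, where `v⁻` plays the role of the left trace `v(a⁻)`:
for every `H`-valued polynomial `v` of degree at most `q` and every `v⁻ ∈ H`,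
`∫_a^b ⟨v', φ v⟩ dt + ⟨v(a) - v⁻, v(a)⟩
  = (1/4)‖v(b)‖² + (1/2)‖v(a) - v⁻‖² - (1/2)‖v⁻‖² + (λ/2) ∫_a^b ‖v‖² dt`. -/
theorem identity_varphi_jump (H : Type*) [NormedAddCommGroup H] [InnerProductSpace ℝ H]
    [CompleteSpace H] (q : ℕ) (a b τ lam : ℝ) (hab : a < b) (hτ : τ = b - a)
    (hlam : lam = 1 / (2 * τ)) (φ : ℝ → ℝ) (hφ : ∀ t, φ t = 1 - lam * (t - a))
    (v : ℝ → H) (hv : IsPolyDegLE H q v) (vminus : H) :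
    (∫ t in a..b, ⟪deriv v t, φ t • v t⟫) + ⟪v a - vminus, v a⟫ =
      (1 / 4) * ‖v b‖ ^ 2 + (1 / 2) * ‖v a - vminus‖ ^ 2 - (1 / 2) * ‖vminus‖ ^ 2
        + (lam / 2) * ∫ t in a..b, ‖v t‖ ^ 2 :=
  identity_varphi_jump_general H q a b τ lam hab hτ hlam φ hφ v hv vminus
end

section
/- Let H be a real Hilbert space with inner product ⟨·,·⟩, let q ≥ 1 be an integer, and let a < b with τ = b − a, λ = 1/(2τ), and φ(t) = 1 − λ(t − a). Let u be an H-valued polynomial of degree at most q and let p be an H-valued polynomial of degree at most q − 1 such that ∫_a^b ⟨u(t) − p(t), w(t)⟩ dt = 0 for every H-valued polynomial w of degree at most q − 1. Then −∫_a^b φ(t) ⟨u'(t), u(t) − p(t)⟩ dt ≥ 0. -/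
open MeasureTheory Set RealInnerProductSpace

/-- An `H`-valued polynomial of degree at most `q - 1` (i.e. with `q` coefficients):
`t ↦ ∑_{i=0}^{q-1} t^i • c i`. -/
def IsPolyDegLT (H : Type*) [AddCommGroup H] [Module ℝ H] (q : ℕ) (f : ℝ → H) : Prop :=
  ∃ c : Fin q → H, ∀ t : ℝ, f t = ∑ i : Fin q, t ^ (i : ℕ) • c i

/-! With `φ t = (1 + λ a) - λ t`, the function `w = φ • u' + λ q • (u - p)` is again a polynomial
of degree `< q`: the `t^q`-coefficient of `φ • u'` is `-λ q` times that of `u`, which `λ q • u`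
cancels, and `p` has degree `< q`. Testing the orthogonality of `u - p` against `w` gives
`∫ φ ⟪u', u - p⟫ = -λ q ∫ ‖u - p‖² ≤ 0`. -/

def polyDegLT (H : Type*) [AddCommGroup H] [Module ℝ H] (q : ℕ) : Submodule ℝ (ℝ → H) where
  carrier := {f | IsPolyDegLT H q f}
  zero_mem' := ⟨0, by simp⟩
  add_mem' := by
    rintro f g ⟨c, hc⟩ ⟨d, hd⟩
    exact ⟨c + d, fun t => by simp [hc, hd, Finset.sum_add_distrib]⟩
  smul_mem' := by
    rintro r f ⟨c, hc⟩
    exact ⟨r • c, fun t => by simp [hc, Finset.smul_sum, smul_comm r]⟩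

section Algebra

variable {H : Type*} [AddCommGroup H] [Module ℝ H] {q : ℕ}

theorem mem_polyDegLT {f : ℝ → H} : f ∈ polyDegLT H q ↔ IsPolyDegLT H q f := Iff.rfl

theorem monomial_mem_polyDegLT {i : ℕ} (hi : i < q) (c : H) :
    (fun t : ℝ => t ^ i • c) ∈ polyDegLT H q :=
  ⟨Pi.single ⟨i, hi⟩ c, fun t => by simp [Pi.single_apply]⟩

end Algebra

section Analysis

variable {H : Type*} [NormedAddCommGroup H] [NormedSpace ℝ H] {q : ℕ}

theorem IsPolyDegLT.continuous {f : ℝ → H} (hf : IsPolyDegLT H q f) : Continuous f := by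
  obtain ⟨c, hc⟩ := hf
  rw [funext hc]
  fun_prop

theorem IsPolyDegLE.continuous {f : ℝ → H} (hf : IsPolyDegLE H q f) : Continuous f :=
  IsPolyDegLT.continuous (q := q + 1) hf

theorem deriv_sum_pow_smul {n : ℕ} (c : Fin n → H) (t : ℝ) :
    deriv (fun s : ℝ => ∑ i : Fin n, s ^ (i : ℕ) • c i) t
      = ∑ i : Fin n, ((i : ℝ) * t ^ ((i : ℕ) - 1)) • c i :=
  (HasDerivAt.fun_sum fun (i : Fin n) _ => (hasDerivAt_pow (i : ℕ) t).smul_const (c i)).deriv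

theorem affine_smul_deriv_sub_mem_polyDegLT {u : ℝ → H} (hu : IsPolyDegLE H q u) (α β : ℝ) :
    (fun t => (α + β * t) • deriv u t - (β * q) • u t) ∈ polyDegLT H q := by
  obtain ⟨c, hc⟩ := hu
  have hsplit : (fun t => (α + β * t) • deriv u t - (β * q) • u t)
      = ∑ i : Fin (q + 1), (((α * i) • fun t : ℝ => t ^ ((i : ℕ) - 1) • c i)
          + ((β * ((i : ℝ) - q)) • fun t : ℝ => t ^ (i : ℕ) • c i)) := by
    ext t
    rw [funext hc, deriv_sum_pow_smul]
    simp only [Finset.sum_apply, Pi.add_apply, Pi.smul_apply, Finset.smul_sum,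
      ← Finset.sum_sub_distrib]
    refine Finset.sum_congr rfl fun i _ => ?_
    rcases hi : (i : ℕ) with _ | k
    · simp
    · push_cast
      module
  rw [hsplit]
  refine Submodule.sum_mem _ fun i _ => add_mem ?_ ?_
  · rcases Nat.eq_zero_or_pos (i : ℕ) with h | h
    · simp [h]
    · exact Submodule.smul_mem _ _ (monomial_mem_polyDegLT (by omega) _)
  · rcases (Nat.lt_succ_iff.mp i.isLt).lt_or_eq with h | h
    · exact Submodule.smul_mem _ _ (monomial_mem_polyDegLT h _)
    · simp [h]

end Analysis

theorem bound_varphi_projection_general (H : Type*) [NormedAddCommGroup H] [InnerProductSpace ℝ H]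
    (q : ℕ) (a b τ lam : ℝ) (hab : a < b) (hτ : τ = b - a)
    (hlam : lam = 1 / (2 * τ)) (φ : ℝ → ℝ) (hφ : ∀ t, φ t = 1 - lam * (t - a))
    (u p : ℝ → H) (hu : IsPolyDegLE H q u) (hp : IsPolyDegLT H q p)
    (horth : ∀ w : ℝ → H, IsPolyDegLT H q w → (∫ t in a..b, ⟪u t - p t, w t⟫) = 0) :
    0 ≤ -∫ t in a..b, φ t * ⟪deriv u t, u t - p t⟫ := by
  set w : ℝ → H := fun t => φ t • deriv u t + (lam * q) • (u t - p t)
  have hw : w ∈ polyDegLT H q := by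
    convert sub_mem (affine_smul_deriv_sub_mem_polyDegLT hu (1 + lam * a) (-lam))
      (Submodule.smul_mem _ (lam * q) (mem_polyDegLT.mpr hp)) using 1
    ext t
    simp only [w, hφ, Pi.sub_apply, Pi.smul_apply]
    module
  have hpoint : ∀ t, φ t * ⟪deriv u t, u t - p t⟫
      = ⟪u t - p t, w t⟫ - lam * q * ‖u t - p t‖ ^ 2 := fun t => by
    simp only [w, inner_add_right, real_inner_smul_right, real_inner_self_eq_norm_sq,
      real_inner_comm (deriv u t)]
    ring
  have hu_cont := hu.continuous
  have hp_cont := hp.continuous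
  have hw_cont := IsPolyDegLT.continuous hw
  rw [intervalIntegral.integral_congr fun t _ => hpoint t,
    intervalIntegral.integral_sub (Continuous.intervalIntegrable (by fun_prop) a b)
      (Continuous.intervalIntegrable (by fun_prop) a b),
    horth w hw, intervalIntegral.integral_const_mul]
  have hlam_nonneg : 0 ≤ lam := by rw [hlam, hτ]; exact div_nonneg one_pos.le (by linarith)
  have hnorm_nonneg : 0 ≤ ∫ t in a..b, ‖u t - p t‖ ^ 2 :=
    intervalIntegral.integral_nonneg hab.le fun t _ => sq_nonneg _
  simpa using mul_nonneg (mul_nonneg hlam_nonneg q.cast_nonneg) hnorm_nonneg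

/-- **Bound involving the weight `φ`.** If `p` is the `L²((a,b);H)`-orthogonal projection
of the polynomial `u` (degree at most `q`) onto polynomials of degree at most `q−1`, then
`−∫_a^b φ(t) ⟨u'(t), u(t) − p(t)⟩ dt ≥ 0`, where `φ(t) = 1 − λ(t − a)`, `λ = 1/(2τ)`. -/
theorem bound_varphi_projection (H : Type*) [NormedAddCommGroup H] [InnerProductSpace ℝ H]
    [CompleteSpace H] (q : ℕ) (hq : 1 ≤ q) (a b τ lam : ℝ) (hab : a < b) (hτ : τ = b - a)
    (hlam : lam = 1 / (2 * τ)) (φ : ℝ → ℝ) (hφ : ∀ t, φ t = 1 - lam * (t - a))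
    (u p : ℝ → H) (hu : IsPolyDegLE H q u) (hp : IsPolyDegLT H q p)
    (horth : ∀ w : ℝ → H, IsPolyDegLT H q w → (∫ t in a..b, ⟪u t - p t, w t⟫) = 0) :
    0 ≤ -∫ t in a..b, φ t * ⟪deriv u t, u t - p t⟫ :=
  bound_varphi_projection_general H q a b τ lam hab hτ hlam φ hφ u p hu hp horth
end

section
/- Let H be a real Hilbert space with inner product ⟨·,·⟩, let q ∈ ℕ, let a < b, and let v : [a,b] → H be continuous. Then there exists exactly one H-valued polynomial p of degree at most q such that p(b) = v(b) and ∫_a^b ⟨v(t) − p(t), w(t)⟩ dt = 0 for every H-valued polynomial w of degree at most q − 1 (the orthogonality condition being vacuous when q = 0). -/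
open MeasureTheory Set RealInnerProductSpace

/-!
Writing `p t = ∑ tⁱ • cᵢ`, the conditions on `p` form the linear system `∑ᵢ M_{ji} • cᵢ = d_j`,
where `M` is the real matrix of the functionals `f ↦ ∫_a^b tʲ f(t) dt` (`j < q`) and `f ↦ f(b)`
evaluated on the monomials, and `d` collects the same functionals of `v`. A real matrix acts on
`H^{q+1}` coordinatewise, so it suffices that `M` is invertible, i.e. that a real polynomial `P` of
degree `≤ q` with `P(b) = 0` that is orthogonal to all polynomials of degree `< q` vanishes.
Writing `P = (X - b) R` with `deg R < q`, orthogonality to `R` gives `∫_a^b (b - t) R(t)² dt = 0`,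
which forces `R = 0`.
-/

open scoped Polynomial

namespace Polynomial

theorem integral_eval_mul_eq_zero_of_natDegree_lt {P R : ℝ[X]} {q : ℕ} {a b : ℝ}
    (hP : ∀ k < q, ∫ t in a..b, t ^ k * P.eval t = 0) (hR : R.natDegree < q) :
    ∫ t in a..b, R.eval t * P.eval t = 0 := by
  simp_rw [eval_eq_sum_range' hR, Finset.sum_mul, mul_assoc]
  rw [intervalIntegral.integral_finsetSum fun k _ =>
    (by fun_prop : Continuous _).intervalIntegrable a b]
  refine Finset.sum_eq_zero fun k hk => ?_
  rw [intervalIntegral.integral_const_mul, hP k (Finset.mem_range.1 hk), mul_zero]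

theorem eq_zero_of_integral_sub_mul_sq_eq_zero {R : ℝ[X]} {a b : ℝ} (hab : a < b)
    (h : ∫ t in a..b, (b - t) * R.eval t ^ 2 = 0) : R = 0 := by
  by_contra hR
  have hroots : volume {t | R.IsRoot t} = 0 := (finite_setOfPred_isRoot hR).measure_zero _
  have hsupp : Ioo a b \ {t | R.IsRoot t} ⊆
      Function.support (fun t => (b - t) * R.eval t ^ 2) ∩ Ioc a b :=
    fun t ⟨ht, hroot⟩ => ⟨mul_ne_zero (sub_ne_zero.2 ht.2.ne') (pow_ne_zero 2 hroot),
      Ioo_subset_Ioc_self ht⟩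
  have hnonneg : 0 ≤ᵐ[volume.restrict (uIoc a b)] fun t => (b - t) * R.eval t ^ 2 := by
    rw [uIoc_of_le hab.le]
    exact ae_restrict_of_forall_mem measurableSet_Ioc fun t ht =>
      mul_nonneg (sub_nonneg.2 ht.2) (sq_nonneg _)
  refine ((intervalIntegral.integral_pos_iff_support_of_nonneg_ae' hnonneg
    ((by fun_prop : Continuous _).intervalIntegrable a b)).2 ⟨hab, ?_⟩).ne' h
  calc 0 < volume (Ioo a b) := (Measure.measure_Ioo_pos volume).2 hab
    _ = volume (Ioo a b \ {t | R.IsRoot t}) := (measure_sdiff_null hroots).symm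
    _ ≤ _ := measure_mono hsupp

theorem eq_zero_of_isRoot_of_integral_pow_mul_eq_zero {P : ℝ[X]} {q : ℕ} {a b : ℝ}
    (hab : a < b) (hdeg : P.natDegree ≤ q) (hb : P.IsRoot b)
    (hP : ∀ k < q, ∫ t in a..b, t ^ k * P.eval t = 0) : P = 0 := by
  obtain ⟨R, rfl⟩ := dvd_iff_isRoot.2 hb
  rcases eq_or_ne R 0 with rfl | hR
  · rw [mul_zero]
  have hRdeg : R.natDegree < q := by
    rw [natDegree_mul (X_sub_C_ne_zero b) hR, natDegree_X_sub_C] at hdeg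
    omega
  have horth := integral_eval_mul_eq_zero_of_natDegree_lt hP hRdeg
  have : ∫ t in a..b, (b - t) * R.eval t ^ 2 = 0 := by
    rw [← neg_eq_zero, ← intervalIntegral.integral_neg, ← horth]
    congr 1 with t
    simp only [eval_mul, eval_sub, eval_X, eval_C]
    ring
  rw [eq_zero_of_integral_sub_mul_sq_eq_zero hab this, mul_zero]

end Polynomial

namespace Matrix

variable {n R M : Type*} [Fintype n] [Semiring R] [AddCommMonoid M] [Module R M]

theorem sum_smul_sum_smul (A B : Matrix n n R) (y : n → M) (i : n) :
    ∑ j, A i j • ∑ k, B j k • y k = ∑ k, (A * B) i k • y k := by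
  simp only [Finset.smul_sum, smul_smul, mul_apply, Finset.sum_smul]
  exact Finset.sum_comm

theorem existsUnique_sum_smul_eq [DecidableEq n] {A : Matrix n n R} (hA : IsUnit A) (d : n → M) :
    ∃! c : n → M, ∀ j, ∑ i, A j i • c i = d j := by
  have sum_one_smul (y : n → M) (j : n) : ∑ i, (1 : Matrix n n R) j i • y i = y j := by
    simp [one_apply]
  refine ⟨fun i => ∑ j, (↑hA.unit⁻¹ : Matrix n n R) i j • d j, fun j => ?_,
    fun c hc => funext fun i => ?_⟩
  · rw [sum_smul_sum_smul, hA.mul_val_inv, sum_one_smul]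
  · simp only [← hc]
    rw [sum_smul_sum_smul, hA.val_inv_mul, sum_one_smul]

end Matrix

section ThomeeFunctionals

variable {E : Type*} [NormedAddCommGroup E] [NormedSpace ℝ E] {q : ℕ} {a b : ℝ}

noncomputable def thomeeFunctionals (q : ℕ) (a b : ℝ) (f : ℝ → E) : Fin (q + 1) → E :=
  Fin.lastCases (f b) fun k => ∫ t in a..b, t ^ (k : ℕ) • f t

noncomputable def thomeeMatrix (q : ℕ) (a b : ℝ) : Matrix (Fin (q + 1)) (Fin (q + 1)) ℝ :=
  Matrix.of fun j i => thomeeFunctionals q a b (fun t => t ^ (i : ℕ)) j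

theorem thomeeFunctionals_sub {f g : ℝ → E} (hf : ContinuousOn f (uIcc a b))
    (hg : ContinuousOn g (uIcc a b)) :
    thomeeFunctionals q a b (f - g) =
      thomeeFunctionals q a b f - thomeeFunctionals q a b g := by
  funext j
  induction j using Fin.lastCases with
  | last => simp [thomeeFunctionals]
  | cast k =>
    simp only [thomeeFunctionals, Fin.lastCases_castSucc, Pi.sub_apply, smul_sub]
    exact intervalIntegral.integral_sub
      (((continuous_pow _).continuousOn.smul hf).intervalIntegrable)
      (((continuous_pow _).continuousOn.smul hg).intervalIntegrable)

theorem thomeeFunctionals_sum_pow_smul [CompleteSpace E] (c : Fin (q + 1) → E)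
    (j : Fin (q + 1)) :
    thomeeFunctionals q a b (fun t => ∑ i : Fin (q + 1), t ^ (i : ℕ) • c i) j =
      ∑ i, thomeeMatrix q a b j i • c i := by
  induction j using Fin.lastCases with
  | last => simp [thomeeFunctionals, thomeeMatrix]
  | cast k =>
    simp only [thomeeFunctionals, thomeeMatrix, Fin.lastCases_castSucc, Matrix.of_apply,
      Finset.smul_sum, smul_smul]
    rw [intervalIntegral.integral_finsetSum fun i _ =>
      (by fun_prop : Continuous _).intervalIntegrable a b]
    simp only [intervalIntegral.integral_smul_const, smul_eq_mul]

end ThomeeFunctionals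

open Polynomial in
theorem isUnit_thomeeMatrix {q : ℕ} {a b : ℝ} (hab : a < b) : IsUnit (thomeeMatrix q a b) := by
  rw [← Matrix.mulVec_injective_iff_isUnit, ← Matrix.coe_mulVecLin, ← LinearMap.ker_eq_bot,
    LinearMap.ker_eq_bot']
  intro x hx
  set P := ofFn (q + 1) x
  have hP : (fun t => P.eval t) = fun t => ∑ i : Fin (q + 1), t ^ (i : ℕ) • x i := by
    simp [P, ofFn_eq_sum_monomial, eval_finsetSum, mul_comm]
  have hφ (j : Fin (q + 1)) : thomeeFunctionals q a b (fun t => P.eval t) j = 0 := by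
    rw [hP, thomeeFunctionals_sum_pow_smul]
    simpa [Matrix.mulVec, dotProduct] using congrFun hx j
  have hP0 : P = 0 := by
    refine eq_zero_of_isRoot_of_integral_pow_mul_eq_zero (q := q) hab ?_ ?_ fun k hk => ?_
    · exact Nat.le_of_lt_succ (ofFn_natDegree_lt (Nat.succ_pos q) x)
    · simpa [thomeeFunctionals] using hφ (Fin.last q)
    · simpa only [thomeeFunctionals, Fin.lastCases_castSucc, smul_eq_mul] using
        hφ (Fin.castSucc ⟨k, hk⟩)
  exact injective_ofFn (q + 1) (hP0.trans (ofFn_zero (q + 1)).symm)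

section InnerProduct

variable {H : Type*} [NormedAddCommGroup H] [InnerProductSpace ℝ H] [CompleteSpace H] {a b : ℝ}

theorem integral_inner_sum_pow_smul {n : ℕ} {f : ℝ → H} (hf : ContinuousOn f (uIcc a b))
    (e : Fin n → H) :
    ∫ t in a..b, ⟪f t, ∑ k : Fin n, t ^ (k : ℕ) • e k⟫ =
      ∑ k : Fin n, ⟪∫ t in a..b, t ^ (k : ℕ) • f t, e k⟫ := by
  have hmom (k : ℕ) : ContinuousOn (fun t => t ^ k • f t) (uIcc a b) :=
    (continuous_pow k).continuousOn.smul hf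
  simp_rw [inner_sum, real_inner_smul_right, ← real_inner_smul_left]
  rw [intervalIntegral.integral_finsetSum fun k _ => ?_]
  · refine Finset.sum_congr rfl fun k _ => ?_
    simp_rw [real_inner_comm (e k)]
    exact (innerSL ℝ (e k)).intervalIntegral_comp_comm (μ := volume) (hmom k).intervalIntegrable
  · exact ((hmom k).inner continuousOn_const).intervalIntegrable

theorem forall_integral_inner_polyDegLT_eq_zero_iff {q : ℕ} {f : ℝ → H}
    (hf : ContinuousOn f (uIcc a b)) :
    (∀ w, IsPolyDegLT H q w → ∫ t in a..b, ⟪f t, w t⟫ = 0) ↔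
      ∀ k : Fin q, ∫ t in a..b, t ^ (k : ℕ) • f t = 0 := by
  constructor
  · intro h k
    have := h _ ⟨Pi.single k (∫ t in a..b, t ^ (k : ℕ) • f t), fun _ => rfl⟩
    rw [integral_inner_sum_pow_smul hf,
      Finset.sum_eq_single k (fun j _ hj => by simp [hj]) (by simp)] at this
    simpa using this
  · rintro h w ⟨e, he⟩
    simp_rw [he, integral_inner_sum_pow_smul hf, h, inner_zero_left, Finset.sum_const_zero]

theorem thomeeFunctionals_eq_zero_iff {q : ℕ} {f : ℝ → H} (hf : ContinuousOn f (uIcc a b)) :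
    thomeeFunctionals q a b f = 0 ↔
      f b = 0 ∧ ∀ w, IsPolyDegLT H q w → ∫ t in a..b, ⟪f t, w t⟫ = 0 := by
  rw [forall_integral_inner_polyDegLT_eq_zero_iff hf, funext_iff, Fin.forall_fin_succ', and_comm]
  simp [thomeeFunctionals]

end InnerProduct

/-- **Well-posedness of the Thomée projection.** For every continuous `v : [a,b] → H` there
exists exactly one polynomial `p` of degree at most `q` with `p(b) = v(b)` such that `v − p`
is `L²((a,b);H)`-orthogonal to all polynomials of degree at most `q − 1`. -/
theorem thomee_projection_existence_uniqueness (H : Type*) [NormedAddCommGroup H]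
    [InnerProductSpace ℝ H] [CompleteSpace H] (q : ℕ) (a b : ℝ) (hab : a < b)
    (v : ℝ → H) (hv : ContinuousOn v (Icc a b)) :
    ∃! p : ℝ → H, IsPolyDegLE H q p ∧ p b = v b ∧
      ∀ w : ℝ → H, IsPolyDegLT H q w → (∫ t in a..b, ⟪v t - p t, w t⟫) = 0 := by
  rw [← uIcc_of_le hab.le] at hv
  have conditions_iff (c : Fin (q + 1) → H) :
      (∑ i : Fin (q + 1), b ^ (i : ℕ) • c i = v b ∧ ∀ w : ℝ → H, IsPolyDegLT H q w →
        ∫ t in a..b, ⟪v t - ∑ i : Fin (q + 1), t ^ (i : ℕ) • c i, w t⟫ = 0) ↔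
      ∀ j, ∑ i, thomeeMatrix q a b j i • c i = thomeeFunctionals q a b v j := by
    have hp : ContinuousOn (fun t => ∑ i : Fin (q + 1), t ^ (i : ℕ) • c i) (uIcc a b) := by
      fun_prop
    have h := thomeeFunctionals_eq_zero_iff (q := q) (hv.sub hp)
    rw [thomeeFunctionals_sub hv hp, sub_eq_zero, funext_iff] at h
    simp only [Pi.sub_apply, sub_eq_zero, thomeeFunctionals_sum_pow_smul] at h
    rw [eq_comm (a := ∑ i : Fin (q + 1), b ^ (i : ℕ) • c i), ← h]
    exact forall_congr' fun j => eq_comm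
  obtain ⟨c, hc, hc_unique⟩ :=
    Matrix.existsUnique_sum_smul_eq (isUnit_thomeeMatrix hab) (thomeeFunctionals q a b v)
  refine ⟨fun t => ∑ i : Fin (q + 1), t ^ (i : ℕ) • c i,
    ⟨⟨c, fun _ => rfl⟩, (conditions_iff c).2 hc⟩, ?_⟩
  rintro p ⟨⟨c', hc'⟩, hp⟩
  obtain rfl : p = _ := funext hc'
  rw [hc_unique c' ((conditions_iff c').1 hp)]
end
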